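/- arXiv:math/0606743 — 8 statements merged into one kernel-verified Lean document; each statement's English description precedes it below -/
import Mathlib

section
/- For all integers n and j with 0 ≤ j ≤ n, the generalized fibonomial coefficient [n choose j]_F is a positive integer. -/
/-- The generalized fibonomial coefficient `[n choose j]_F` as a rational number:
`(F n * F (n-1) * ⋯ * F (n-j+1)) / (F 1 * F 2 * ⋯ * F j)`, with value `1` for `j = 0`. -/
def fibin (F : ℤ → ℤ) (n : ℤ) (j : ℕ) : ℚ :=
  (∏ i ∈ Finset.range j, (F (n - i) : ℚ)) / ∏ i ∈ Finset.range j, (F ((i : ℤ) + 1) : ℚ)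

/-! The addition formula `F (a + b + 1) = F (a + 1) * F (b + 1) + F a * F b`, taken at
`a = j + 1`, `b = n - j - 1`, splits the top factor `F (n + 1)` of the numerator and gives the
Pascal-type recurrence `[n+1, j+1] = F (j + 2) * [n, j+1] + F (n - j - 1) * [n, j]`. Hence, by
induction on `n`, the denominator divides the numerator for every `j` (for `j > n` the numerator
contains `F 0 = 0`). For `k ≥ 1` all `F m` with `m ≥ 1` are positive, so the quotient is too. -/

open Finset

structure IsKFibonacci (k : ℤ) (F : ℤ → ℤ) : Prop where
  zero : F 0 = 0
  one : F 1 = 1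
  recurrence : ∀ n, F (n + 1) = k * F n + F (n - 1)

namespace IsKFibonacci

variable {k : ℤ} {F : ℤ → ℤ}

theorem add_add_one (hF : IsKFibonacci k F) (a b : ℤ) :
    F (a + b + 1) = F (a + 1) * F (b + 1) + F a * F b := by
  induction b using Int.induction_on generalizing a with
  | zero => simp [hF.zero, hF.one]
  | succ b ih =>
    rw [show a + (b + 1) + 1 = a + 1 + b + 1 by ring, ih, hF.recurrence (a + 1),
      hF.recurrence (b + 1), add_sub_cancel_right, add_sub_cancel_right]
    ring
  | pred b ih =>
    have h := ih (a - 1)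
    rw [sub_add_cancel, show a - 1 + -(b : ℤ) + 1 = a + (-b - 1) + 1 by ring] at h
    rw [h, sub_add_cancel, hF.recurrence a, hF.recurrence (-b)]
    ring

theorem pos (hF : IsKFibonacci k F) (hk : 0 < k) {n : ℤ} (hn : 0 < n) : 0 < F n := by
  have key : ∀ m : ℕ, 0 ≤ F m ∧ 0 < F (m + 1) := by
    intro m
    induction m with
    | zero => simp [hF.zero, hF.one]
    | succ m ih =>
      refine ⟨ih.2.le, ?_⟩
      rw [Nat.cast_succ, hF.recurrence, add_sub_cancel_right]
      nlinarith [ih.1, ih.2]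
  obtain ⟨m, rfl⟩ : ∃ m : ℕ, n = m + 1 := ⟨(n - 1).toNat, by omega⟩
  exact (key m).2

theorem prod_dvd_prod_sub (hF : IsKFibonacci k F) (n j : ℕ) :
    ∏ i ∈ range j, F (i + 1) ∣ ∏ i ∈ range j, F (n - i) := by
  induction n generalizing j with
  | zero =>
    cases j with
    | zero => simp
    | succ j => simp [prod_range_succ', hF.zero]
  | succ n ih =>
    cases j with
    | zero => simp
    | succ j =>
      have hsplit : ∏ i ∈ range (j + 1), F ((n + 1 : ℕ) - i)
          = F (n + 1) * ∏ i ∈ range j, F (n - i) := by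
        rw [prod_range_succ', mul_comm, Nat.cast_succ]
        congr 1
        exact prod_congr rfl fun i _ => by congr 1; push_cast; ring
      have hadd : F (n + 1) = F (j + 2) * F (n - j) + F (j + 1) * F (n - j - 1) := by
        have h := hF.add_add_one (j + 1) (n - j - 1)
        rwa [show (j + 1 : ℤ) + (n - j - 1) + 1 = n + 1 by ring, sub_add_cancel,
          show (j + 1 : ℤ) + 1 = j + 2 by ring] at h
      rw [hsplit, hadd, add_mul]
      apply dvd_add
      · exact (ih (j + 1)).trans ⟨F (j + 2), by rw [prod_range_succ]; ring⟩
      · rw [prod_range_succ]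
        exact (mul_dvd_mul (ih j) (dvd_refl _)).trans ⟨F (n - j - 1), by ring⟩

end IsKFibonacci

theorem fibin_int_pos (k : ℤ) (hk : 1 ≤ k) (F : ℤ → ℤ)
    (hF0 : F 0 = 0) (hF1 : F 1 = 1)
    (hFrec : ∀ n : ℤ, F (n + 1) = k * F n + F (n - 1)) :
    ∀ n j : ℤ, 0 ≤ j → j ≤ n →
      ∃ m : ℤ, 0 < m ∧ fibin F n j.toNat = (m : ℚ) := by
  intro n j hj hjn
  have hF : IsKFibonacci k F := ⟨hF0, hF1, hFrec⟩
  lift j to ℕ using hj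
  lift n to ℕ using by omega
  obtain ⟨m, hm⟩ := hF.prod_dvd_prod_sub n j
  have hden : 0 < ∏ i ∈ range j, F (i + 1) := prod_pos fun i _ => hF.pos hk (by omega)
  have hnum : 0 < ∏ i ∈ range j, F (n - i) :=
    prod_pos fun i hi => hF.pos hk (by rw [mem_range] at hi; omega)
  refine ⟨m, pos_of_mul_pos_right (hm ▸ hnum) hden.le, ?_⟩
  rw [fibin, Int.toNat_natCast, div_eq_iff (by exact_mod_cast hden.ne'), mul_comm]
  exact_mod_cast hm
end

section
/- For all integers α, n, i, j, the generalized Fibonacci numbers satisfy F_{α+n+i} · F_{α+n+j} − (−1)^{α+i+j} · F_{n−i} · F_{n−j} = F_{α+2n} · F_{α+i+j}. -/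
/-!
The identity is Vajda's identity `F (m + p) * F (m + q) - F m * F (m + p + q) = (-1)^m * F p * F q`
at `m = α + i + j`, `p = n - j`, `q = n - i`. For fixed `m` and `q` the difference of the two sides
of Vajda's identity satisfies the recurrence in `p`, so it vanishes once it vanishes at `p = 0, 1`;
the case `p = 1` satisfies the recurrence in `q` and reduces to `q = 0` and Cassini's identity.
Cassini's expression `F (m + 1) ^ 2 - F m * F (m + 2)` changes sign with each step in `m`.
-/

variable {R : Type*}

theorem apply_eq_negOnePow_mul [Ring R] {Q : ℤ → R} (h : ∀ n, Q (n + 1) = -Q n) (n : ℤ) :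
    Q n = n.negOnePow * Q 0 := by
  induction n using Int.induction_on with
  | zero => simp
  | succ n ih => rw [h, ih, Int.negOnePow_succ, Units.val_neg, Int.cast_neg, neg_mul]
  | pred n ih =>
    have h' := h (-n - 1)
    rw [sub_add_cancel, ih, Int.negOnePow_neg] at h'
    rw [Int.negOnePow_sub, Int.negOnePow_neg, Int.negOnePow_one, mul_neg_one, Units.val_neg,
      Int.cast_neg, neg_mul, h', neg_neg]

def IsFibRec [Ring R] (k : R) (G : ℤ → R) : Prop :=
  ∀ n, G (n + 1) = k * G n + G (n - 1)

namespace IsFibRec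

theorem eq_zero [Ring R] {k : R} {G : ℤ → R} (hG : IsFibRec k G) (h0 : G 0 = 0)
    (h1 : G 1 = 0) (n : ℤ) : G n = 0 := by
  suffices ∀ n, G n = 0 ∧ G (n + 1) = 0 from (this n).1
  intro n
  induction n using Int.induction_on with
  | zero => simpa using ⟨h0, h1⟩
  | succ n ih =>
    refine ⟨ih.2, ?_⟩
    rw [hG, add_sub_cancel_right, ih.1, ih.2, mul_zero, add_zero]
  | pred n ih =>
    refine ⟨?_, by rw [sub_add_cancel]; exact ih.1⟩
    have h := hG (-n)
    rwa [ih.1, ih.2, mul_zero, zero_add, eq_comm] at h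

variable [CommRing R] {k : R} {F : ℤ → R}

theorem cassini (hF : IsFibRec k F) (hF0 : F 0 = 0) (hF1 : F 1 = 1) (m : ℤ) :
    F (m + 1) ^ 2 - F m * F (m + 2) = m.negOnePow := by
  have step (n : ℤ) : F (n + 1 + 1) ^ 2 - F (n + 1) * F (n + 1 + 2) =
      -(F (n + 1) ^ 2 - F n * F (n + 2)) := by
    linear_combination (norm := ring_nf) -F (n + 1) * hF (n + 2) + F (n + 2) * hF (n + 1)
  simpa [hF0, hF1] using
    apply_eq_negOnePow_mul (Q := fun n => F (n + 1) ^ 2 - F n * F (n + 2)) step m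

theorem vajda (hF : IsFibRec k F) (hF0 : F 0 = 0) (hF1 : F 1 = 1) (m p q : ℤ) :
    F (m + p) * F (m + q) - F m * F (m + p + q) = m.negOnePow * (F p * F q) := by
  have at_one (q : ℤ) : F (m + 1) * F (m + q) - F m * F (m + 1 + q) = m.negOnePow * F q := by
    have hG : IsFibRec k fun q =>
        F (m + 1) * F (m + q) - F m * F (m + 1 + q) - m.negOnePow * F q := fun q => by
      linear_combination (norm := ring_nf)
        F (m + 1) * hF (m + q) - F m * hF (m + 1 + q) - (m.negOnePow : R) * hF q
    refine sub_eq_zero.1 (hG.eq_zero ?_ ?_ q)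
    · simp only [add_zero, hF0, mul_zero]
      ring
    · simp only [hF1, mul_one, add_assoc, one_add_one_eq_two, ← sq]
      exact sub_eq_zero.2 (hF.cassini hF0 hF1 m)
  have hG : IsFibRec k fun p =>
      F (m + p) * F (m + q) - F m * F (m + p + q) - m.negOnePow * (F p * F q) := fun p => by
    linear_combination (norm := ring_nf)
      F (m + q) * hF (m + p) - F m * hF (m + p + q) - (m.negOnePow : R) * F q * hF p
  refine sub_eq_zero.1 (hG.eq_zero ?_ ?_ p)
  · simp only [add_zero, hF0, zero_mul, mul_zero]
    ring
  · simp only [hF1, one_mul]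
    exact sub_eq_zero.2 (at_one q)

end IsFibRec

theorem gen_fib_identity_general (k : ℤ) (F : ℤ → ℤ)
    (hF0 : F 0 = 0) (hF1 : F 1 = 1)
    (hFrec : ∀ n : ℤ, F (n + 1) = k * F n + F (n - 1)) :
    ∀ α n i j : ℤ,
      F (α + n + i) * F (α + n + j) -
          ((α + i + j).negOnePow : ℤ) * (F (n - i) * F (n - j)) =
        F (α + 2 * n) * F (α + i + j) := by
  intro α n i j
  have h := IsFibRec.vajda hFrec hF0 hF1 (α + i + j) (n - j) (n - i)
  rw [Int.cast_id] at h
  linear_combination (norm := ring_nf) h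

theorem gen_fib_identity (k : ℤ) (hk : 1 ≤ k) (F : ℤ → ℤ)
    (hF0 : F 0 = 0) (hF1 : F 1 = 1)
    (hFrec : ∀ n : ℤ, F (n + 1) = k * F n + F (n - 1)) :
    ∀ α n i j : ℤ,
      F (α + n + i) * F (α + n + j) -
          ((α + i + j).negOnePow : ℤ) * (F (n - i) * F (n - j)) =
        F (α + 2 * n) * F (α + i + j) :=
  gen_fib_identity_general k F hF0 hF1 hFrec
end

section
/- For all integers n, i, j, the generalized Lucas and Fibonacci numbers satisfy L_{n+i} · L_{n+j} − L_n · L_{n+i+j} = (−1)^{n+1} · (k² + 4) · F_i · F_j. -/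
/-!
Every solution `x` of `x (n + 1) = k x n + x (n - 1)` satisfies
`x (n + i) x (n + j) - x n x (n + i + j) = (-1)ⁿ (x 1 ² - x 0 x 2) F i F j`.
For fixed `n` and `i`, both sides solve the recurrence in `j`, so it suffices to compare them at
`j = 0` (both vanish) and `j = 1`. The case `j = 1` is handled in the same way in `i`, which reduces
it to `i = 1`: the Cassini quantity `x (n + 1)² - x n x (n + 2)`, which changes sign at each step.
For the Lucas numbers, `L 1 ² - L 0 L 2 = -(k² + 4)`.
-/

variable {R : Type*} [CommRing R]

def IsHoradam (k : R) (x : ℤ → R) : Prop :=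
  ∀ n : ℤ, x (n + 1) = k * x n + x (n - 1)

namespace IsHoradam

variable {k : R} {x y : ℤ → R}

theorem add_one_add_one (hx : IsHoradam k x) (n : ℤ) : x (n + 1 + 1) = k * x (n + 1) + x n := by
  simpa only [add_sub_cancel_right] using hx (n + 1)

theorem comp_add_left (hx : IsHoradam k x) (a : ℤ) : IsHoradam k (fun m => x (a + m)) := by
  intro n
  simpa only [add_assoc, add_sub_assoc] using hx (a + n)

theorem const_mul (hx : IsHoradam k x) (c : R) : IsHoradam k (fun m => c * x m) := by
  intro n
  dsimp only
  rw [hx n]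
  ring

theorem sub (hx : IsHoradam k x) (hy : IsHoradam k y) : IsHoradam k (fun m => x m - y m) := by
  intro n
  dsimp only
  rw [hx n, hy n]
  ring

theorem ext (hx : IsHoradam k x) (hy : IsHoradam k y) (h0 : x 0 = y 0) (h1 : x 1 = y 1) :
    x = y := by
  have pair : ∀ m : ℤ, x m = y m ∧ x (m + 1) = y (m + 1) := by
    intro m
    induction m using Int.induction_on with
    | zero => exact ⟨h0, h1⟩
    | succ m ih => exact ⟨ih.2, by rw [hx.add_one_add_one, hy.add_one_add_one, ih.1, ih.2]⟩
    | pred m ih =>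
      refine ⟨?_, by rw [sub_add_cancel]; exact ih.1⟩
      have hxm := hx (-(m : ℤ))
      have hym := hy (-(m : ℤ))
      rw [ih.1, ih.2] at hxm
      exact add_left_cancel (hxm.symm.trans hym)
  exact funext fun m => (pair m).1

theorem cassini_succ (hx : IsHoradam k x) (n : ℤ) :
    x (n + 1 + 1) ^ 2 - x (n + 1) * x (n + 1 + 1 + 1) =
      -(x (n + 1) ^ 2 - x n * x (n + 1 + 1)) := by
  rw [hx.add_one_add_one (n + 1), hx.add_one_add_one n]
  ring

theorem cassini (hx : IsHoradam k x) (n : ℤ) :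
    x (n + 1) ^ 2 - x n * x (n + 1 + 1) = (n.negOnePow : ℤ) * (x 1 ^ 2 - x 0 * x 2) := by
  induction n using Int.induction_on with
  | zero => norm_num
  | succ m ih =>
    rw [hx.cassini_succ, ih, Int.negOnePow_succ]
    push_cast
    ring
  | pred m ih =>
    have h := hx.cassini_succ (-(m : ℤ) - 1)
    rw [sub_add_cancel, ih] at h
    rw [sub_add_cancel, Int.negOnePow_sub, Int.negOnePow_one]
    push_cast
    linear_combination h

variable {F : ℤ → R}

theorem mul_sub_mul_one (hx : IsHoradam k x) (hF : IsHoradam k F) (hF0 : F 0 = 0)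
    (hF1 : F 1 = 1) (n i : ℤ) :
    x (n + 1) * x (n + i) - x n * x (n + 1 + i) =
      (n.negOnePow : ℤ) * (x 1 ^ 2 - x 0 * x 2) * F i := by
  have lhs := ((hx.comp_add_left n).const_mul (x (n + 1))).sub
    ((hx.comp_add_left (n + 1)).const_mul (x n))
  have rhs := hF.const_mul ((n.negOnePow : ℤ) * (x 1 ^ 2 - x 0 * x 2) : R)
  refine congrFun (lhs.ext rhs ?_ ?_) i
  · rw [add_zero, add_zero, hF0]
    ring
  · simp only [hF1, mul_one, ← hx.cassini n]
    ring

theorem mul_sub_mul (hx : IsHoradam k x) (hF : IsHoradam k F) (hF0 : F 0 = 0)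
    (hF1 : F 1 = 1) (n i j : ℤ) :
    x (n + i) * x (n + j) - x n * x (n + i + j) =
      (n.negOnePow : ℤ) * (x 1 ^ 2 - x 0 * x 2) * F i * F j := by
  have lhs := ((hx.comp_add_left n).const_mul (x (n + i))).sub
    ((hx.comp_add_left (n + i)).const_mul (x n))
  have rhs := hF.const_mul ((n.negOnePow : ℤ) * (x 1 ^ 2 - x 0 * x 2) * F i : R)
  refine congrFun (lhs.ext rhs ?_ ?_) j
  · rw [add_zero, add_zero, hF0]
    ring
  · simp only [hF1, mul_one, ← hx.mul_sub_mul_one hF hF0 hF1 n i, add_right_comm n 1 i]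
    ring

end IsHoradam

theorem gen_lucas_product_identity_general (k : ℤ)
    (F : ℤ → ℤ) (hF0 : F 0 = 0) (hF1 : F 1 = 1)
    (hFrec : ∀ n : ℤ, F (n + 1) = k * F n + F (n - 1))
    (L : ℤ → ℤ) (hL0 : L 0 = 2) (hL1 : L 1 = k)
    (hLrec : ∀ n : ℤ, L (n + 1) = k * L n + L (n - 1)) :
    ∀ n i j : ℤ,
      L (n + i) * L (n + j) - L n * L (n + i + j) =
        ((n + 1).negOnePow : ℤ) * ((k ^ 2 + 4) * (F i * F j)) := by
  intro n i j
  have hL2 : L 2 = k ^ 2 + 2 :=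
    calc L 2 = k * L 1 + L (1 - 1) := hLrec 1
      _ = k ^ 2 + 2 := by rw [hL1, sub_self, hL0]; ring
  rw [IsHoradam.mul_sub_mul hLrec hFrec hF0 hF1, hL0, hL1, hL2, Int.negOnePow_succ, Int.cast_id]
  push_cast
  ring

theorem gen_lucas_product_identity (k : ℤ) (hk : 1 ≤ k)
    (F : ℤ → ℤ) (hF0 : F 0 = 0) (hF1 : F 1 = 1)
    (hFrec : ∀ n : ℤ, F (n + 1) = k * F n + F (n - 1))
    (L : ℤ → ℤ) (hL0 : L 0 = 2) (hL1 : L 1 = k)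
    (hLrec : ∀ n : ℤ, L (n + 1) = k * L n + L (n - 1)) :
    ∀ n i j : ℤ,
      L (n + i) * L (n + j) - L n * L (n + i + j) =
        ((n + 1).negOnePow : ℤ) * ((k ^ 2 + 4) * (F i * F j)) :=
  gen_lucas_product_identity_general k F hF0 hF1 hFrec L hL0 hL1 hLrec
end

section
/- For every integer n ≥ 1, F_{2n−1} divides F_{2n+1}² + k² and F_{2n+1} divides F_{2n−1}² + k²; that is, F_{2n+1}² ≡ −k² (mod F_{2n−1}) and F_{2n−1}² ≡ −k² (mod F_{2n+1}). -/
/-!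
The Cassini quantity `F (m - 1) * F (m + 1) - F m ^ 2` changes sign at each step of the
recurrence, so at even indices it equals its value `1` at `0`: `F (2n-1) F (2n+1) = F (2n)² + 1`.
Writing `F (2n+1) = k F (2n) + F (2n-1)`, this gives
`F (2n+1)² + k² ≡ k² (F (2n)² + 1) ≡ 0` modulo `F (2n-1)`, and symmetrically modulo `F (2n+1)`.
-/

section Cassini

variable {R : Type*} [CommRing R]

def cassini (F : ℤ → R) (m : ℤ) : R := F (m - 1) * F (m + 1) - F m ^ 2

variable {k : R} {F : ℤ → R}

theorem cassini_add_one (hF : ∀ n, F (n + 1) = k * F n + F (n - 1)) (m : ℤ) :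
    cassini F (m + 1) = -cassini F m := by
  have h := hF (m + 1)
  rw [add_sub_cancel_right, add_assoc, one_add_one_eq_two] at h
  rw [cassini, cassini, add_sub_cancel_right, add_assoc, one_add_one_eq_two, h, hF m]
  ring

theorem cassini_add_two (hF : ∀ n, F (n + 1) = k * F n + F (n - 1)) (m : ℤ) :
    cassini F (m + 2) = cassini F m := by
  rw [← one_add_one_eq_two, ← add_assoc, cassini_add_one hF, cassini_add_one hF, neg_neg]

theorem cassini_two_mul (hF : ∀ n, F (n + 1) = k * F n + F (n - 1)) (n : ℤ) :
    cassini F (2 * n) = cassini F 0 := by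
  induction n using Int.induction_on with
  | zero => rw [mul_zero]
  | succ n ih => rw [mul_add_one, cassini_add_two hF, ih]
  | pred n ih => rw [← ih, ← cassini_add_two hF]; ring_nf

theorem cassini_zero (hF : ∀ n, F (n + 1) = k * F n + F (n - 1)) (h0 : F 0 = 0) (h1 : F 1 = 1) :
    cassini F 0 = 1 := by
  have hneg : F (-1) = 1 := by simpa [h0, h1] using (hF 0).symm
  simp [cassini, hneg, h0, h1]

end Cassini

theorem dvd_sq_add_sq_of_mul_eq_sq_add_one {R : Type*} [CommRing R] {a b c k : R}
    (hmul : a * c = b ^ 2 + 1) (hc : c = k * b + a) : a ∣ c ^ 2 + k ^ 2 :=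
  ⟨k ^ 2 * c + 2 * k * b + a, by rw [hc] at hmul ⊢; linear_combination (-k ^ 2) * hmul⟩

theorem gen_fib_congruence_general (k : ℤ) (F : ℤ → ℤ)
    (hF0 : F 0 = 0) (hF1 : F 1 = 1)
    (hFrec : ∀ n : ℤ, F (n + 1) = k * F n + F (n - 1)) :
    ∀ n : ℤ, 1 ≤ n →
      F (2 * n - 1) ∣ F (2 * n + 1) ^ 2 + k ^ 2 ∧
      F (2 * n + 1) ∣ F (2 * n - 1) ^ 2 + k ^ 2 := by
  intro n _
  have hmul : F (2 * n - 1) * F (2 * n + 1) = F (2 * n) ^ 2 + 1 := by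
    have h := cassini_two_mul hFrec n
    rw [cassini_zero hFrec hF0 hF1, cassini, sub_eq_iff_eq_add'] at h
    rw [h, add_comm]
  have hrec : F (2 * n + 1) = k * F (2 * n) + F (2 * n - 1) := hFrec (2 * n)
  refine ⟨dvd_sq_add_sq_of_mul_eq_sq_add_one hmul hrec, ?_⟩
  rw [← neg_sq k]
  exact dvd_sq_add_sq_of_mul_eq_sq_add_one (by rw [mul_comm, hmul]) (by rw [hrec]; ring)

theorem gen_fib_congruence (k : ℤ) (hk : 1 ≤ k) (F : ℤ → ℤ)
    (hF0 : F 0 = 0) (hF1 : F 1 = 1)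
    (hFrec : ∀ n : ℤ, F (n + 1) = k * F n + F (n - 1)) :
    ∀ n : ℤ, 1 ≤ n →
      F (2 * n - 1) ∣ F (2 * n + 1) ^ 2 + k ^ 2 ∧
      F (2 * n + 1) ∣ F (2 * n - 1) ^ 2 + k ^ 2 :=
  gen_fib_congruence_general k F hF0 hF1 hFrec
end

section
/- For every integer m ≥ 1, arctan(k / F_{2m+1}) + arctan(1 / F_{2m+2}) = arctan(1 / F_{2m}), where arctan is the real inverse tangent function and the generalized Fibonacci numbers are regarded as real numbers. -/
/-!
The Cassini quantity `F (n + 1) ^ 2 - F n * F (n + 2)` changes sign at each step, so at even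
indices it equals its value `1` at `0`. Writing `A, B, C` for `F (2m), F (2m+1), F (2m+2)`,
this and `C = k B + A` give `A (k C + B) = B C - k`, which is exactly what the addition
formula for `arctan` needs to turn `arctan (k / B) + arctan (1 / C)` into `arctan (1 / A)`.
-/

section LinearRecurrence

variable {R : Type*} {k : R} {F : ℤ → R}

theorem linearRecurrence_add_two [Ring R] (hF : ∀ n, F (n + 1) = k * F n + F (n - 1)) (n : ℤ) :
    F (n + 2) = k * F (n + 1) + F n := by
  simpa only [add_assoc, one_add_one_eq_two, add_sub_cancel_right] using hF (n + 1)

theorem antiperiodic_cassini [CommRing R] (hF : ∀ n, F (n + 1) = k * F n + F (n - 1)) :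
    Function.Antiperiodic (fun n ↦ F (n + 1) ^ 2 - F n * F (n + 2)) 1 := by
  intro n
  have h₀ := linearRecurrence_add_two hF n
  have h₁ := linearRecurrence_add_two hF (n + 1)
  rw [show n + 1 + 2 = n + 3 by ring, show n + 1 + 1 = n + 2 by ring] at h₁
  simp only [show n + 1 + 1 = n + 2 by ring, show n + 1 + 2 = n + 3 by ring]
  linear_combination (-F (n + 1)) * h₁ + F (n + 2) * h₀

theorem cassini_two_mul_s11 [CommRing R] (hF : ∀ n, F (n + 1) = k * F n + F (n - 1)) (m : ℤ) :
    F (2 * m + 1) ^ 2 - F (2 * m) * F (2 * m + 2) = F 1 ^ 2 - F 0 * F 2 := by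
  simpa [mul_comm m 2] using (antiperiodic_cassini hF).periodic_two_mul.int_mul_eq m

theorem linearRecurrence_pos [Ring R] [PartialOrder R] [IsStrictOrderedRing R] (hk : 0 < k)
    (hF : ∀ n, F (n + 1) = k * F n + F (n - 1)) (h₀ : 0 ≤ F 0) (h₁ : 0 < F 1) {n : ℤ}
    (hn : 1 ≤ n) : 0 < F n := by
  suffices 0 ≤ F (n - 1) ∧ 0 < F n from this.2
  induction n, hn using Int.leInduction with
  | base => simpa using ⟨h₀, h₁⟩
  | succ n _ ih =>
    rw [add_sub_cancel_right, hF]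
    exact ⟨ih.2.le, add_pos_of_pos_of_nonneg (mul_pos hk ih.2) ih.1⟩

end LinearRecurrence

theorem arctan_div_add_arctan_one_div {k A B C : ℝ} (hk : 0 ≤ k) (hA : 0 < A) (hB : 0 < B)
    (hC : 0 < C) (h : A * (k * C + B) = B * C - k) :
    Real.arctan (k / B) + Real.arctan (1 / C) = Real.arctan (1 / A) := by
  have hBC : 0 < B * C - k := h ▸ by positivity
  rw [Real.arctan_add (by rw [div_mul_div_comm, mul_one, div_lt_one (by positivity)]; linarith)]
  congr 1
  field_simp
  linear_combination h

theorem gen_fib_arctan (k : ℤ) (hk : 1 ≤ k) (F : ℤ → ℤ)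
    (hF0 : F 0 = 0) (hF1 : F 1 = 1)
    (hFrec : ∀ n : ℤ, F (n + 1) = k * F n + F (n - 1)) :
    ∀ m : ℤ, 1 ≤ m →
      Real.arctan ((k : ℝ) / (F (2 * m + 1) : ℝ)) +
          Real.arctan (1 / (F (2 * m + 2) : ℝ)) =
        Real.arctan (1 / (F (2 * m) : ℝ)) := by
  intro m hm
  have hpos {n : ℤ} (hn : 1 ≤ n) : (0 : ℝ) < F n := by
    exact_mod_cast linearRecurrence_pos (by omega) hFrec hF0.ge (by omega) hn
  have hcassini : F (2 * m + 1) ^ 2 - F (2 * m) * F (2 * m + 2) = 1 := by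
    simpa [hF0, hF1] using cassini_two_mul_s11 hFrec m
  have hrec := linearRecurrence_add_two hFrec (2 * m)
  refine arctan_div_add_arctan_one_div (by exact_mod_cast (by omega : (0 : ℤ) ≤ k))
    (hpos (by omega)) (hpos (by omega)) (hpos (by omega)) ?_
  exact_mod_cast (by linear_combination (-k) * hcassini - F (2 * m + 1) * hrec :
    F (2 * m) * (k * F (2 * m + 2) + F (2 * m + 1)) = F (2 * m + 1) * F (2 * m + 2) - k)
end

section
/- The series ∑_{n=0}^{∞} arctan(k / F_{2n+3}) converges and its sum equals arctan(1/k), where arctan is the real inverse tangent function and the generalized Fibonacci numbers are regarded as real numbers. -/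
/-!
Cassini's identity `F (2n+2) F (2n+4) + 1 = F (2n+3) ^ 2` and the recurrence
`F (2n+4) - F (2n+2) = k F (2n+3)`, fed into `arctan (1/a) - arctan (1/b) = arctan ((b-a)/(1+ab))`,
give `arctan (k / F (2n+3)) = arctan (1 / F (2n+2)) - arctan (1 / F (2n+4))`.
The series therefore telescopes to `arctan (1 / F 2) = arctan (1 / k)`, as `F n → ∞`.
-/

open Filter Topology Real

theorem Antitone.hasSum_sub_succ {g : ℕ → ℝ} {l : ℝ} (hg : Antitone g)
    (hl : Tendsto g atTop (𝓝 l)) : HasSum (fun n => g n - g (n + 1)) (g 0 - l) := by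
  rw [hasSum_iff_tendsto_nat_of_nonneg fun n => sub_nonneg.2 (hg n.le_succ)]
  simp_rw [Finset.sum_range_sub']
  exact tendsto_const_nhds.sub hl

theorem Real.arctan_one_div_sub_arctan_one_div {a b : ℝ} (hab : 0 < a * b) :
    arctan (1 / a) - arctan (1 / b) = arctan ((b - a) / (1 + a * b)) := by
  have ha : a ≠ 0 := by rintro rfl; simp at hab
  have hb : b ≠ 0 := by rintro rfl; simp at hab
  have hab' : 1 + a * b ≠ 0 := by positivity
  have hprod : 1 / a * -(1 / b) = -(1 / (a * b)) := by rw [mul_neg, one_div_mul_one_div]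
  rw [sub_eq_add_neg, ← arctan_neg, arctan_add (by linarith [hprod, one_div_pos.2 hab]), hprod,
    sub_neg_eq_add]
  congr 1
  field_simp
  ring

theorem cassini_succ_of_recurrence {k : ℤ} {F : ℤ → ℤ}
    (hFrec : ∀ n, F (n + 1) = k * F n + F (n - 1)) (n : ℤ) :
    F (n + 1) * F (n + 3) - F (n + 2) ^ 2 = -(F n * F (n + 2) - F (n + 1) ^ 2) := by
  have h1 := hFrec (n + 1)
  have h2 := hFrec (n + 2)
  rw [add_assoc, add_sub_cancel_right] at h1
  rw [add_sub_assoc, show n + 2 + 1 = n + 3 by ring] at h2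
  norm_num at h1 h2
  linear_combination F (n + 1) * h2 - F (n + 2) * h1

structure IsGenFib (k : ℤ) (F : ℤ → ℤ) : Prop where
  zero : F 0 = 0
  one : F 1 = 1
  succ : ∀ n, F (n + 1) = k * F n + F (n - 1)

namespace IsGenFib

variable {k : ℤ} {F : ℤ → ℤ}

theorem two (hF : IsGenFib k F) : F 2 = k := by
  simpa [hF.zero, hF.one] using hF.succ 1

theorem succ_succ (hF : IsGenFib k F) (n : ℕ) : F (n + 2) = k * F (n + 1) + F n := by
  simpa [add_assoc, one_add_one_eq_two] using hF.succ (n + 1)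

theorem cassini (hF : IsGenFib k F) (n : ℕ) :
    F n * F (n + 2) - F (n + 1) ^ 2 = (-1) ^ (n + 1) := by
  induction n with
  | zero => simp [hF.zero, hF.one]
  | succ n ih =>
    push_cast
    rw [add_assoc, show (1 : ℤ) + 2 = 3 by norm_num, add_assoc, one_add_one_eq_two,
      cassini_succ_of_recurrence hF.succ, ih, pow_succ _ (n + 1)]
    ring

theorem pos (hF : IsGenFib k F) (hk : 1 ≤ k) {n : ℤ} (hn : 0 < n) : 0 < F n := by
  lift n to ℕ using hn.le
  suffices ∀ m : ℕ, 0 ≤ F m ∧ 0 < F (m + 1) by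
    obtain ⟨m, rfl⟩ := Nat.exists_eq_succ_of_ne_zero (by omega : n ≠ 0)
    simpa using (this m).2
  intro m
  induction m with
  | zero => simp [hF.zero, hF.one]
  | succ m ih =>
    push_cast
    refine ⟨ih.2.le, ?_⟩
    rw [add_assoc, one_add_one_eq_two, hF.succ_succ]
    nlinarith [ih.1, ih.2]

theorem natCast_le_succ (hF : IsGenFib k F) (hk : 1 ≤ k) (n : ℕ) : (n : ℤ) ≤ F (n + 1) := by
  induction n with
  | zero => simp [hF.one]
  | succ n ih =>
    push_cast
    rw [add_assoc, one_add_one_eq_two, hF.succ_succ]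
    rcases n with _ | n
    · simp [hF.zero, hF.one]; linarith
    · push_cast at ih ⊢
      have h1 : 0 < F (n + 1) := hF.pos hk (by positivity)
      nlinarith [hF.pos hk (by positivity : (0 : ℤ) < n + 2)]

theorem arctan_one_div_even_sub (hF : IsGenFib k F) (hk : 1 ≤ k) (n : ℕ) :
    arctan (1 / F (2 * n + 2)) - arctan (1 / F (2 * n + 4)) = arctan (k / F (2 * n + 3)) := by
  have h2 : (0 : ℝ) < F (2 * n + 2) := Int.cast_pos.2 (hF.pos hk (by positivity))
  have h3 : (0 : ℝ) < F (2 * n + 3) := Int.cast_pos.2 (hF.pos hk (by positivity))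
  have h4 : (0 : ℝ) < F (2 * n + 4) := Int.cast_pos.2 (hF.pos hk (by positivity))
  have hrec : F (2 * n + 4) - F (2 * n + 2) = k * F (2 * n + 3) := by
    have := hF.succ (2 * n + 3)
    rw [show (2 * n + 3 : ℤ) + 1 = 2 * n + 4 by ring, show (2 * n + 3 : ℤ) - 1 = 2 * n + 2 by ring]
      at this
    linear_combination this
  have hcas : 1 + F (2 * n + 2) * F (2 * n + 4) = F (2 * n + 3) ^ 2 := by
    have := hF.cassini (2 * n + 2)
    push_cast at this
    rw [add_assoc, show (2 : ℤ) + 2 = 4 by norm_num, add_assoc, show (2 : ℤ) + 1 = 3 by norm_num,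
      Odd.neg_one_pow ⟨n + 1, by ring⟩] at this
    linear_combination this
  have hkey : (F (2 * n + 4) - F (2 * n + 2)) * F (2 * n + 3) =
      k * (1 + F (2 * n + 2) * F (2 * n + 4)) := by
    rw [hrec, hcas]; ring
  rw [Real.arctan_one_div_sub_arctan_one_div (mul_pos h2 h4)]
  congr 1
  rw [div_eq_div_iff (by positivity) h3.ne']
  exact_mod_cast hkey

theorem tendsto_arctan_one_div (hF : IsGenFib k F) (hk : 1 ≤ k) :
    Tendsto (fun n : ℕ => arctan (1 / F (2 * n + 2))) atTop (𝓝 0) := by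
  have hle (n : ℕ) : (n : ℝ) ≤ F (2 * n + 2) := by
    have := hF.natCast_le_succ hk (2 * n + 1)
    push_cast at this
    rw [add_assoc, one_add_one_eq_two] at this
    have : (2 * n + 1 : ℝ) ≤ F (2 * n + 2) := by exact_mod_cast this
    linarith [n.cast_nonneg (α := ℝ)]
  have hF : Tendsto (fun n : ℕ => (F (2 * n + 2) : ℝ)) atTop atTop :=
    tendsto_atTop_mono hle tendsto_natCast_atTop_atTop
  simpa [Function.comp_def] using
    (continuous_arctan.tendsto 0).comp (tendsto_inv_atTop_zero.comp hF)

end IsGenFib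

theorem gen_fib_arctan_series (k : ℤ) (hk : 1 ≤ k) (F : ℤ → ℤ)
    (hF0 : F 0 = 0) (hF1 : F 1 = 1)
    (hFrec : ∀ n : ℤ, F (n + 1) = k * F n + F (n - 1)) :
    HasSum (fun n : ℕ => Real.arctan ((k : ℝ) / (F (2 * (n : ℤ) + 3) : ℝ)))
      (Real.arctan (1 / (k : ℝ))) := by
  have hF : IsGenFib k F := ⟨hF0, hF1, hFrec⟩
  set g : ℕ → ℝ := fun n => arctan (1 / F (2 * n + 2))
  have hterm (n : ℕ) : arctan (k / F (2 * n + 3)) = g n - g (n + 1) := by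
    rw [← hF.arctan_one_div_even_sub hk n]
    simp only [g]
    push_cast
    ring_nf
  have hanti : Antitone g := antitone_nat_of_succ_le fun n => by
    rw [← sub_nonneg, ← hterm]
    have hk' : (0 : ℝ) < k := by exact_mod_cast hk
    exact arctan_nonneg.2 (div_pos hk' (Int.cast_pos.2 (hF.pos hk (by positivity)))).le
  convert hanti.hasSum_sub_succ (hF.tendsto_arctan_one_div hk) using 1
  · exact funext hterm
  · simp [g, hF.two]
end

section
/- Let k be an odd integer with k > 1. A positive integer n is a generalized Fibonacci number (i.e., n = F_m for some integer m ≥ 1) if and only if n²·(k² + 4) + 4 is a perfect square or n²·(k² + 4) − 4 is a perfect square. -/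
/-!
With `D = k ^ 2 + 4`, the identity `(k n + 2 p) ^ 2 = D n ^ 2 - 4 (n ^ 2 - k p n - p ^ 2)` turns
`D n ^ 2 ± 4 = y ^ 2` into `n ^ 2 - k p n - p ^ 2 = ∓1` with `2 p = |y| - k n ≥ 0` (the parity of
`y ^ 2 - (k n) ^ 2` makes `p` integral). The form `b ^ 2 - k a b - a ^ 2` only changes sign under the
recurrence step `(a, b) ↦ (b, k b + a)`, so it is `±1` on consecutive terms `(F (m - 1), F m)`. Conversely,
for `k ≥ 2` a solution `(a, b)` with `0 < a`, `0 < b` steps back to the solution `(b - k a, a)`, again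
with nonnegative entries and smaller second entry; the descent stops at `(0, 1) = (F 0, F 1)`.
-/

def cassiniForm (k a b : ℤ) : ℤ := b ^ 2 - k * a * b - a ^ 2

lemma cassiniForm_step (k a b : ℤ) : cassiniForm k b (k * b + a) = -cassiniForm k a b := by
  unfold cassiniForm; ring

lemma sq_eq_sub_cassiniForm (k p n : ℤ) :
    (k * n + 2 * p) ^ 2 = n ^ 2 * (k ^ 2 + 4) - 4 * cassiniForm k p n := by
  unfold cassiniForm; ring

lemma sq_add_four_or_sq_sub_four_of_isUnit_cassiniForm {k p n : ℤ}
    (hu : IsUnit (cassiniForm k p n)) :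
    (∃ y : ℤ, n ^ 2 * (k ^ 2 + 4) + 4 = y ^ 2) ∨ (∃ y : ℤ, n ^ 2 * (k ^ 2 + 4) - 4 = y ^ 2) := by
  have hy := sq_eq_sub_cassiniForm k p n
  rcases Int.isUnit_iff.mp hu with hc | hc
  · exact .inr ⟨k * n + 2 * p, by rw [hy, hc]; ring⟩
  · exact .inl ⟨k * n + 2 * p, by rw [hy, hc]; ring⟩

lemma exists_nonneg_isUnit_cassiniForm_of_sq {k n : ℤ}
    (h : (∃ y : ℤ, n ^ 2 * (k ^ 2 + 4) + 4 = y ^ 2) ∨ (∃ y : ℤ, n ^ 2 * (k ^ 2 + 4) - 4 = y ^ 2)) :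
    ∃ p, 0 ≤ p ∧ IsUnit (cassiniForm k p n) := by
  obtain ⟨y, c, hc, hy⟩ : ∃ y c : ℤ, (c = 1 ∨ c = -1) ∧ y ^ 2 = n ^ 2 * (k ^ 2 + 4) - 4 * c := by
    rcases h with ⟨y, hy⟩ | ⟨y, hy⟩
    · exact ⟨y, -1, .inr rfl, by rw [← hy]; ring⟩
    · exact ⟨y, 1, .inl rfl, by rw [← hy]; ring⟩
  have hsq : |y| ^ 2 = (k * n) ^ 2 + 4 * (n ^ 2 - c) := by rw [sq_abs, hy]; ring
  have hkn : k * n ≤ |y| := by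
    have : (k * n) ^ 2 ≤ |y| ^ 2 := by
      rcases hc with rfl | rfl
      · rcases eq_or_ne n 0 with rfl | hn
        · nlinarith [sq_nonneg |y|]
        · nlinarith [pow_pos (abs_pos.mpr hn) 2, sq_abs n]
      · nlinarith [sq_nonneg n]
    exact (le_abs_self _).trans (abs_le_of_sq_le_sq this (abs_nonneg y))
  have hpar : Even (|y| - k * n) := by
    have : Even (|y| ^ 2 - (k * n) ^ 2) := ⟨2 * (n ^ 2 - c), by rw [hsq]; ring⟩
    simpa [Int.even_sub, Int.even_pow, even_abs] using this
  obtain ⟨p, hp⟩ := hpar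
  refine ⟨p, by omega, Int.isUnit_iff.mpr ?_⟩
  have hform := sq_eq_sub_cassiniForm k p n
  rw [show k * n + 2 * p = |y| by omega, sq_abs, hy] at hform
  rcases hc with rfl | rfl <;> omega

structure IsGenFib_s16 (k : ℤ) (F : ℤ → ℤ) : Prop where
  zero : F 0 = 0
  one : F 1 = 1
  succ : ∀ n, F (n + 1) = k * F n + F (n - 1)

namespace IsGenFib_s16

variable {k : ℤ} {F : ℤ → ℤ}

lemma cassiniForm_succ (hF : IsGenFib_s16 k F) (m : ℤ) :
    cassiniForm k (F (m + 1 - 1)) (F (m + 1)) = -cassiniForm k (F (m - 1)) (F m) := by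
  rw [add_sub_cancel_right, hF.succ, cassiniForm_step]

lemma isUnit_cassiniForm (hF : IsGenFib_s16 k F) (m : ℤ) : IsUnit (cassiniForm k (F (m - 1)) (F m)) := by
  induction m with
  | zero =>
    have hF_neg_one : F (-1) = 1 := by simpa [hF.zero, hF.one] using (hF.succ 0).symm
    simp [cassiniForm, hF_neg_one, hF.zero]
  | succ i ih => rwa [hF.cassiniForm_succ, IsUnit.neg_iff]
  | pred i ih => rwa [← IsUnit.neg_iff, ← hF.cassiniForm_succ, sub_add_cancel]

theorem exists_eq_of_isUnit_cassiniForm (hF : IsGenFib_s16 k F) (hk : 1 < k) {a b : ℤ} (ha : 0 ≤ a)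
    (hb : 0 < b) (hu : IsUnit (cassiniForm k a b)) : ∃ m, 1 ≤ m ∧ F (m - 1) = a ∧ F m = b := by
  rcases ha.eq_or_lt with rfl | ha
  · have hb1 : b = 1 := by
      have : IsUnit (b ^ 2) := by simpa [cassiniForm] using hu
      rcases Int.isUnit_iff.mp ((isUnit_pow_iff two_ne_zero).mp this) with h | h <;> omega
    exact ⟨1, le_rfl, hF.zero, hb1 ▸ hF.one⟩
  · have hprev : cassiniForm k a b = -cassiniForm k (b - k * a) a := by
      rw [← cassiniForm_step, add_sub_cancel]
    have hprev_nonneg : 0 ≤ b - k * a := by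
      by_contra! hneg
      rcases Int.isUnit_iff.mp hu with hc | hc <;> unfold cassiniForm at hc <;> nlinarith
    have hab : a < b := by nlinarith
    obtain ⟨m, hm, hm₁, hm₂⟩ :=
      hF.exists_eq_of_isUnit_cassiniForm hk hprev_nonneg ha (by rwa [hprev, IsUnit.neg_iff] at hu)
    refine ⟨m + 1, by omega, by rwa [add_sub_cancel_right], ?_⟩
    rw [hF.succ, hm₁, hm₂]
    ring
termination_by b.toNat
decreasing_by omega

end IsGenFib_s16

theorem gen_fib_perfect_square_criterion_general (k : ℤ) (hk : 1 < k)
    (F : ℤ → ℤ) (hF0 : F 0 = 0) (hF1 : F 1 = 1)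
    (hFrec : ∀ n : ℤ, F (n + 1) = k * F n + F (n - 1)) :
    ∀ n : ℤ, 0 < n →
      ((∃ m : ℤ, 1 ≤ m ∧ n = F m) ↔
        ((∃ y : ℤ, n ^ 2 * (k ^ 2 + 4) + 4 = y ^ 2) ∨
         (∃ y : ℤ, n ^ 2 * (k ^ 2 + 4) - 4 = y ^ 2))) := by
  have hF : IsGenFib_s16 k F := ⟨hF0, hF1, hFrec⟩
  intro n hn
  constructor
  · rintro ⟨m, -, rfl⟩
    exact sq_add_four_or_sq_sub_four_of_isUnit_cassiniForm (hF.isUnit_cassiniForm m)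
  · intro h
    obtain ⟨p, hp, hu⟩ := exists_nonneg_isUnit_cassiniForm_of_sq h
    obtain ⟨m, hm, -, rfl⟩ := hF.exists_eq_of_isUnit_cassiniForm hk hp hn hu
    exact ⟨m, hm, rfl⟩

theorem gen_fib_perfect_square_criterion (k : ℤ) (hk : 1 < k) (hodd : Odd k)
    (F : ℤ → ℤ) (hF0 : F 0 = 0) (hF1 : F 1 = 1)
    (hFrec : ∀ n : ℤ, F (n + 1) = k * F n + F (n - 1)) :
    ∀ n : ℤ, 0 < n →
      ((∃ m : ℤ, 1 ≤ m ∧ n = F m) ↔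
        ((∃ y : ℤ, n ^ 2 * (k ^ 2 + 4) + 4 = y ^ 2) ∨
         (∃ y : ℤ, n ^ 2 * (k ^ 2 + 4) - 4 = y ^ 2))) :=
  gen_fib_perfect_square_criterion_general k hk F hF0 hF1 hFrec
end

section
/- For every integer n, the Carlitz-type identity Z_{n+1}³ − k³·Z_n³ − Z_{n−1}³ = 3k · Z_{n+1} · Z_n · Z_{n−1} holds both for Z = F (the generalized Fibonacci numbers) and for Z = L (the generalized Lucas numbers). -/
/-- With `x = k Z_n` and `y = Z_{n-1}` this is `(x + y)³ - x³ - y³ = 3xy(x + y)`. -/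
theorem cube_sub_eq_of_rec {R : Type*} [CommRing R] {k : R} {Z : ℤ → R}
    (hrec : ∀ n : ℤ, Z (n + 1) = k * Z n + Z (n - 1)) (n : ℤ) :
    Z (n + 1) ^ 3 - k ^ 3 * Z n ^ 3 - Z (n - 1) ^ 3 =
      3 * k * (Z (n + 1) * Z n * Z (n - 1)) := by
  rw [hrec n]
  ring

theorem gen_carlitz_identity_general (k : ℤ)
    (F : ℤ → ℤ)
    (hFrec : ∀ n : ℤ, F (n + 1) = k * F n + F (n - 1))
    (L : ℤ → ℤ)
    (hLrec : ∀ n : ℤ, L (n + 1) = k * L n + L (n - 1)) :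
    ∀ n : ℤ,
      (F (n + 1) ^ 3 - k ^ 3 * F n ^ 3 - F (n - 1) ^ 3 =
        3 * k * (F (n + 1) * F n * F (n - 1))) ∧
      (L (n + 1) ^ 3 - k ^ 3 * L n ^ 3 - L (n - 1) ^ 3 =
        3 * k * (L (n + 1) * L n * L (n - 1))) :=
  fun n => ⟨cube_sub_eq_of_rec hFrec n, cube_sub_eq_of_rec hLrec n⟩

theorem gen_carlitz_identity (k : ℤ) (hk : 1 ≤ k)
    (F : ℤ → ℤ) (hF0 : F 0 = 0) (hF1 : F 1 = 1)
    (hFrec : ∀ n : ℤ, F (n + 1) = k * F n + F (n - 1))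
    (L : ℤ → ℤ) (hL0 : L 0 = 2) (hL1 : L 1 = k)
    (hLrec : ∀ n : ℤ, L (n + 1) = k * L n + L (n - 1)) :
    ∀ n : ℤ,
      (F (n + 1) ^ 3 - k ^ 3 * F n ^ 3 - F (n - 1) ^ 3 =
        3 * k * (F (n + 1) * F n * F (n - 1))) ∧
      (L (n + 1) ^ 3 - k ^ 3 * L n ^ 3 - L (n - 1) ^ 3 =
        3 * k * (L (n + 1) * L n * L (n - 1))) :=
  gen_carlitz_identity_general k F hFrec L hLrec
end
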